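/- arXiv:2411.01718 — 2 statements merged into one kernel-verified Lean document; each statement's English description precedes it below -/
import Mathlib

section
/- Let A be an n×n positive semidefinite Hermitian matrix over ℂ such that every eigenvalue of A is at least 1 and the trace of A equals 2n. Then det(A) ≥ n + 1. -/
/-!
Write the eigenvalues as `λᵢ = 1 + aᵢ` with `aᵢ ≥ 0`. Expanding the product, all terms are
nonnegative, so `det A = ∏ (1 + aᵢ) ≥ 1 + ∑ aᵢ = 1 + tr A - n = n + 1`.
-/

open ComplexOrder

theorem Finset.one_add_sum_le_prod_one_add {ι R : Type*} [CommSemiring R] [PartialOrder R]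
    [IsOrderedRing R] (s : Finset ι) (a : ι → R) (ha : ∀ i ∈ s, 0 ≤ a i) :
    1 + ∑ i ∈ s, a i ≤ ∏ i ∈ s, (1 + a i) := by
  classical
  induction s using Finset.induction_on with
  | empty => simp
  | insert j s hj ih =>
    rw [sum_insert hj, prod_insert hj]
    have haj : 0 ≤ a j := ha j (mem_insert_self j s)
    have hs : 0 ≤ ∑ i ∈ s, a i := sum_nonneg fun i hi => ha i (mem_insert_of_mem hi)
    calc 1 + (a j + ∑ i ∈ s, a i)
        ≤ 1 + (a j + ∑ i ∈ s, a i) + a j * ∑ i ∈ s, a i :=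
          le_add_of_nonneg_right (mul_nonneg haj hs)
      _ = (1 + a j) * (1 + ∑ i ∈ s, a i) := by ring
      _ ≤ (1 + a j) * ∏ i ∈ s, (1 + a i) :=
        mul_le_mul_of_nonneg_left (ih fun i hi => ha i (mem_insert_of_mem hi))
          (add_nonneg zero_le_one haj)

namespace Matrix.IsHermitian

variable {n 𝕜 : Type*} [Fintype n] [DecidableEq n] [RCLike 𝕜] {A : Matrix n n 𝕜}

theorem re_det_eq_prod_eigenvalues (hA : A.IsHermitian) :
    RCLike.re A.det = ∏ i, hA.eigenvalues i := by
  rw [hA.det_eq_prod_eigenvalues, ← RCLike.ofReal_prod, RCLike.ofReal_re]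

theorem re_trace_eq_sum_eigenvalues (hA : A.IsHermitian) :
    RCLike.re A.trace = ∑ i, hA.eigenvalues i := by
  rw [hA.trace_eq_sum_eigenvalues, ← RCLike.ofReal_sum, RCLike.ofReal_re]

theorem one_add_re_trace_sub_card_le_re_det (hA : A.IsHermitian)
    (h1 : ∀ i, 1 ≤ hA.eigenvalues i) :
    1 + RCLike.re A.trace - Fintype.card n ≤ RCLike.re A.det := by
  have key := Finset.univ.one_add_sum_le_prod_one_add (fun i => hA.eigenvalues i - 1)
    fun i _ => sub_nonneg.mpr (h1 i)
  simp only [add_sub_cancel, Finset.sum_sub_distrib, Finset.sum_const, Finset.card_univ,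
    nsmul_one] at key
  rw [hA.re_trace_eq_sum_eigenvalues, hA.re_det_eq_prod_eigenvalues]
  linarith

end Matrix.IsHermitian

/-- A PSD Hermitian matrix whose eigenvalues are all at least 1 and whose trace
is `2n` has determinant at least `n + 1`. -/
theorem det_ge_of_eigenvalues_ge_one_trace_eq
    (n : ℕ) (A : Matrix (Fin n) (Fin n) ℂ) (hA : A.PosSemidef)
    (h1 : ∀ i, 1 ≤ hA.1.eigenvalues i)
    (htr : A.trace = 2 * n) :
    (n : ℝ) + 1 ≤ A.det.re := by
  have key := hA.1.one_add_re_trace_sub_card_le_re_det h1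
  have hre : RCLike.re A.trace = 2 * n := by simp [htr]
  rw [hre, Fintype.card_fin] at key
  change _ ≤ RCLike.re A.det
  linarith
end

section
/- For any real number t with 0 ≤ t ≤ 1/2, the quantity (2 − t²)² / ((1 − t²)(4 − t²)³) is at most (1/16)(1 + t²). -/
/-- For `0 ≤ t ≤ 1/2`, `(2 − t²)² / ((1 − t²)(4 − t²)³) ≤ (1/16)(1 + t²)`. -/
theorem gaussian_moment_ratio_bound (t : ℝ) (h0 : 0 ≤ t) (h1 : t ≤ 1 / 2) :
    (2 - t ^ 2) ^ 2 / ((1 - t ^ 2) * (4 - t ^ 2) ^ 3) ≤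
      (1 / 16) * (1 + t ^ 2) := by
  have ht2 : t ^ 2 ≤ 1 / 4 := by nlinarith
  have hpos : 0 < (1 - t ^ 2) * (4 - t ^ 2) ^ 3 := mul_pos (by nlinarith) (pow_pos (by nlinarith) 3)
  rw [div_le_iff₀ hpos]
  nlinarith [sq_nonneg t, sq_nonneg (t^2), sq_nonneg (t^3), pow_nonneg (sq_nonneg t) 2, pow_nonneg (sq_nonneg t) 3, pow_nonneg (sq_nonneg t) 4]
end
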